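/- arXiv:1411.0227 — 3 statements merged into one kernel-verified Lean document; each statement's English description precedes it below -/
import Mathlib

section
/- Let q > 1 and γ ∈ (1 − 1/q, 1). Then for every ρ > 1 one has (ρ^{1−(1−γ)q} − 1)·(ρ − 1)^{q−1} ≤ (ρ^γ − 1)^q. -/
theorem rpow_concavity_ineq (q γ : ℝ) (hq : 1 < q) (hγ : γ ∈ Set.Ioo (1 - 1 / q) 1) :
    ∀ ρ : ℝ, 1 < ρ →
      (ρ ^ (1 - (1 - γ) * q) - 1) * (ρ - 1) ^ (q - 1) ≤ (ρ ^ γ - 1) ^ q := by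
  obtain ⟨hγl, hγu⟩ := hγ
  intro ρ hρ
  have hq0 : 0 < q := by linarith
  have hρ0 : 0 < ρ := by linarith
  set s : ℝ := 1 - (1 - γ) * q with hs
  have hs0 : 0 < s := by
    have h1 : (1 - γ) * q < (1 / q) * q := by
      apply mul_lt_mul_of_pos_right (by linarith) hq0
    have h2 : (1 / q) * q = 1 := by field_simp
    simp only [hs]; nlinarith
  set x := ρ ^ s with hxdef
  have hx1 : 1 < x := (Real.one_lt_rpow_iff_of_pos hρ0).mpr (Or.inl ⟨hρ, hs0⟩)
  have hx0 : 0 < x := by linarith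
  set a : ℝ := 1 / q with hadef
  set b : ℝ := 1 - 1 / q with hbdef
  have ha : 0 ≤ a := by positivity
  have hb : 0 ≤ b := by
    have : 1 / q < 1 := by rw [div_lt_one hq0]; exact hq
    simp only [hbdef]; linarith
  have hab : a + b = 1 := by simp [hadef, hbdef]
  have hxm : 0 ≤ (x - 1) / x := div_nonneg (by linarith) hx0.le
  have hρm : 0 ≤ (ρ - 1) / ρ := div_nonneg (by linarith) hρ0.le
  have h1 := Real.geom_mean_le_arith_mean2_weighted ha hb hxm hρm hab
  have h2 := Real.geom_mean_le_arith_mean2_weighted ha hb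
    (by positivity : (0:ℝ) ≤ 1 / x) (by positivity : (0:ℝ) ≤ 1 / ρ) hab
  have hsum : ((x - 1) / x) ^ a * ((ρ - 1) / ρ) ^ b + (1 / x) ^ a * (1 / ρ) ^ b ≤ 1 := by
    have heq : a * ((x - 1) / x) + b * ((ρ - 1) / ρ) + (a * (1 / x) + b * (1 / ρ)) = a + b := by
      field_simp; ring
    linarith
  have hxa : 0 < x ^ a := Real.rpow_pos_of_pos hx0 a
  have hρb : 0 < ρ ^ b := Real.rpow_pos_of_pos hρ0 b
  have key : (x - 1) ^ a * (ρ - 1) ^ b + 1 ≤ x ^ a * ρ ^ b := by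
    have hrw : (x - 1) ^ a * (ρ - 1) ^ b + 1 =
        (((x - 1) / x) ^ a * ((ρ - 1) / ρ) ^ b + (1 / x) ^ a * (1 / ρ) ^ b) * (x ^ a * ρ ^ b) := by
      rw [Real.div_rpow (by linarith) hx0.le, Real.div_rpow (by linarith) hρ0.le,
        Real.div_rpow zero_le_one hx0.le, Real.div_rpow zero_le_one hρ0.le, Real.one_rpow,
        Real.one_rpow]
      field_simp
    rw [hrw]
    calc (((x - 1) / x) ^ a * ((ρ - 1) / ρ) ^ b + (1 / x) ^ a * (1 / ρ) ^ b) * (x ^ a * ρ ^ b)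
        ≤ 1 * (x ^ a * ρ ^ b) := by
          apply mul_le_mul_of_nonneg_right hsum (by positivity)
      _ = x ^ a * ρ ^ b := one_mul _
  have hxaρb : x ^ a * ρ ^ b = ρ ^ γ := by
    rw [hxdef, ← Real.rpow_mul hρ0.le, ← Real.rpow_add hρ0]
    congr 1
    simp only [hs, hadef, hbdef]
    field_simp
    ring
  rw [hxaρb] at key
  have hmid : 0 ≤ (x - 1) ^ a * (ρ - 1) ^ b :=
    mul_nonneg (Real.rpow_nonneg (by linarith) a) (Real.rpow_nonneg (by linarith) b)
  have h3 : (x - 1) ^ a * (ρ - 1) ^ b ≤ ρ ^ γ - 1 := by linarith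
  have h4 := Real.rpow_le_rpow hmid h3 hq0.le
  have hrw2 : ((x - 1) ^ a * (ρ - 1) ^ b) ^ q = (x - 1) * (ρ - 1) ^ (q - 1) := by
    rw [Real.mul_rpow (Real.rpow_nonneg (by linarith) a) (Real.rpow_nonneg (by linarith) b), ← Real.rpow_mul (by linarith),
      ← Real.rpow_mul (by linarith)]
    have e1 : a * q = 1 := by rw [hadef]; field_simp
    have e2 : b * q = q - 1 := by rw [hbdef]; field_simp
    rw [e1, e2, Real.rpow_one]
  rw [hrw2] at h4
  exact h4
end

section
/- Suppose a measurable set E ⊂ ℝ^n contains two disjoint measurable subsets B and Q with |B| ≥ c₀ h^n and |Q| ≥ c₀ h^n, and suppose v : E → ℝ is measurable with v ≤ a − ξ on B, while the average of v over Q is at least a − ξ/3 for some real a and ξ > 0. Then ∫_E |v − μ|^{n/(n−1)} ≥ c₀ (ξ/3)^{n/(n−1)} h^n, where μ = (1/|E|)∫_E v, in the case μ ≥ a − ξ/3; and in the case μ < a − ξ/3, ∫_E |v − μ|^{n/(n−1)} ≥ c₀ (ξ/3)^{n/(n−1)} h^n as well (using the bound on Q). In all cases ∫_E |v − μ|^{n/(n−1)}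 ≥ c₀ (ξ/3)^{n/(n−1)} h^n. -/
open MeasureTheory ENNReal

/-!
If the mean `μ` is at least `a - 2ξ/3`, then `|v - μ| ≥ ξ/3` pointwise on `B`; otherwise the
average of `v - μ` over `Q` is at least `ξ/3`. Either way some `S ⊆ E` with `|S| ≥ c₀ hⁿ` has
`|∫_S (v - μ)| ≥ (ξ/3) |S|`, and Jensen's inequality for `t ↦ t ^ p`, `p = n/(n-1) ≥ 1`, turns
this into `∫_S |v - μ| ^ p ≥ (ξ/3) ^ p |S|`.
-/

variable {X : Type*} [MeasurableSpace X] {μ : Measure X} {s t : Set X} {f : X → ℝ}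

theorem mul_measureReal_le_setIntegral_of_le_div (hs : μ s ≠ ∞) {c : ℝ}
    (h : c ≤ (∫ x in s, f x ∂μ) / μ.real s) : c * μ.real s ≤ ∫ x in s, f x ∂μ := by
  rcases measureReal_nonneg.eq_or_lt with h0 | h0
  · rw [← h0, mul_zero, Measure.restrict_eq_zero.2 ((measureReal_eq_zero_iff hs).1 h0.symm),
      integral_zero_measure]
  · exact (le_div_iff₀ h0).1 h

theorem rpow_mul_measureReal_le_setIntegral_abs_rpow {p c : ℝ} (hp : 1 ≤ p) (hc : 0 ≤ c)
    (hs : μ s ≠ ∞) (hf : IntegrableOn f s μ) (hfp : IntegrableOn (fun x => |f x| ^ p) s μ)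
    (h : c * μ.real s ≤ |∫ x in s, f x ∂μ|) :
    c ^ p * μ.real s ≤ ∫ x in s, |f x| ^ p ∂μ := by
  rcases measureReal_nonneg.eq_or_lt with h0 | hpos
  · rw [← h0, mul_zero]
    exact integral_nonneg fun x => by positivity
  have : IsFiniteMeasure (μ.restrict s) := isFiniteMeasure_restrict.2 hs
  have : NeZero (μ.restrict s) :=
    ⟨by simpa [Measure.restrict_eq_zero, measureReal_eq_zero_iff hs] using hpos.ne'⟩
  have hc_le_avg : c ≤ ⨍ x in s, |f x| ∂μ := by
    rw [setAverage_eq, smul_eq_mul, ← div_eq_inv_mul, le_div_iff₀ hpos]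
    exact h.trans abs_integral_le_integral_abs
  have jensen : (⨍ x in s, |f x| ∂μ) ^ p ≤ ⨍ x in s, |f x| ^ p ∂μ :=
    (convexOn_rpow hp).map_average_le
      (Real.continuous_rpow_const (by linarith)).continuousOn isClosed_Ici
      (.of_forall fun x => abs_nonneg (f x)) hf.abs hfp
  have := (Real.rpow_le_rpow hc hc_le_avg (by linarith)).trans jensen
  rwa [setAverage_eq, smul_eq_mul, ← div_eq_inv_mul, le_div_iff₀ hpos] at this

theorem mul_rpow_le_setIntegral_abs_rpow_of_subset {p c m : ℝ} (hp : 1 ≤ p) (hc : 0 ≤ c)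
    (hst : s ⊆ t) (ht : μ t ≠ ∞) (hf : IntegrableOn f t μ)
    (hfp : IntegrableOn (fun x => |f x| ^ p) t μ) (hm : ENNReal.ofReal m ≤ μ s)
    (h : c * μ.real s ≤ |∫ x in s, f x ∂μ|) :
    m * c ^ p ≤ ∫ x in t, |f x| ^ p ∂μ := by
  have hs : μ s ≠ ∞ := (measure_mono hst).trans_lt ht.lt_top |>.ne
  calc m * c ^ p ≤ c ^ p * μ.real s := by
        rw [mul_comm]
        gcongr
        exact (ofReal_le_iff_le_toReal hs).1 hm
    _ ≤ ∫ x in s, |f x| ^ p ∂μ := rpow_mul_measureReal_le_setIntegral_abs_rpow hp hc hs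
        (hf.mono_set hst) (hfp.mono_set hst) h
    _ ≤ ∫ x in t, |f x| ^ p ∂μ :=
        setIntegral_mono_set hfp (.of_forall fun x => by positivity) hst.eventuallyLE

theorem oscillation_dichotomy_general (n : ℕ) (hn : 2 ≤ n) (h c₀ ξ a : ℝ) (hξ : 0 < ξ)
    (E B Q : Set (Fin n → ℝ)) (hBE : B ⊆ E) (hQE : Q ⊆ E) (hBm : MeasurableSet B)
    (hEfin : volume E < ⊤)
    (hB : ENNReal.ofReal (c₀ * h ^ n) ≤ volume B)
    (hQvol : ENNReal.ofReal (c₀ * h ^ n) ≤ volume Q)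
    (v : (Fin n → ℝ) → ℝ) (hvint : IntegrableOn v E)
    (hvpow : IntegrableOn
        (fun x => |v x - (∫ y in E, v y) / (volume E).toReal| ^ ((n : ℝ) / ((n : ℝ) - 1))) E)
    (hvB : ∀ x ∈ B, v x ≤ a - ξ)
    (hvQ : a - ξ / 3 ≤ (∫ x in Q, v x) / (volume Q).toReal) :
    c₀ * (ξ / 3) ^ ((n : ℝ) / ((n : ℝ) - 1)) * h ^ n ≤
      ∫ x in E, |v x - (∫ y in E, v y) / (volume E).toReal| ^ ((n : ℝ) / ((n : ℝ) - 1)) := by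
  set p : ℝ := (n : ℝ) / ((n : ℝ) - 1)
  set μ : ℝ := (∫ y in E, v y) / (volume E).toReal
  have hp : 1 ≤ p := by
    have : (2 : ℝ) ≤ n := by exact_mod_cast hn
    rw [le_div_iff₀ (by linarith)]
    linarith
  have hf : IntegrableOn (fun x => v x - μ) E := hvint.sub (integrableOn_const hEfin.ne)
  suffices ∃ S ⊆ E, ENNReal.ofReal (c₀ * h ^ n) ≤ volume S ∧
      ξ / 3 * volume.real S ≤ |∫ x in S, (v x - μ)| by
    obtain ⟨S, hSE, hSvol, hS⟩ := this
    rw [mul_right_comm]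
    exact mul_rpow_le_setIntegral_abs_rpow_of_subset hp (by positivity) hSE hEfin.ne hf hvpow
      hSvol hS
  have hBfin : volume B ≠ ⊤ := ((measure_mono hBE).trans_lt hEfin).ne
  have hQfin : volume Q ≠ ⊤ := ((measure_mono hQE).trans_lt hEfin).ne
  rcases le_or_gt (a - 2 * ξ / 3) μ with hμ | hμ
  · refine ⟨B, hBE, hB, ?_⟩
    have : ξ / 3 * volume.real B ≤ ∫ x in B, (μ - v x) :=
      setIntegral_ge_of_const_le_real hBm hBfin (fun x hx => by linarith [hvB x hx])
        ((integrableOn_const hBfin).sub (hvint.mono_set hBE))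
    rw [← abs_neg, ← integral_neg]
    simpa using this.trans (le_abs_self _)
  · refine ⟨Q, hQE, hQvol, ?_⟩
    have hQint := mul_measureReal_le_setIntegral_of_le_div hQfin hvQ
    rw [integral_sub (hvint.mono_set hQE) (integrableOn_const hQfin), setIntegral_const,
      smul_eq_mul]
    refine le_trans ?_ (le_abs_self _)
    nlinarith [measureReal_nonneg (μ := volume) (s := Q)]

theorem oscillation_dichotomy (n : ℕ) (hn : 2 ≤ n) (h c₀ ξ a : ℝ)
    (hh : 0 < h) (hc₀ : 0 < c₀) (hξ : 0 < ξ)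
    (E B Q : Set (Fin n → ℝ)) (hBE : B ⊆ E) (hQE : Q ⊆ E) (hBQ : Disjoint B Q)
    (hEm : MeasurableSet E) (hBm : MeasurableSet B) (hQm : MeasurableSet Q)
    (hEfin : volume E < ⊤) (hEpos : 0 < volume E)
    (hB : ENNReal.ofReal (c₀ * h ^ n) ≤ volume B)
    (hQvol : ENNReal.ofReal (c₀ * h ^ n) ≤ volume Q)
    (v : (Fin n → ℝ) → ℝ) (hvint : IntegrableOn v E)
    (hvpow : IntegrableOn
        (fun x => |v x - (∫ y in E, v y) / (volume E).toReal| ^ ((n : ℝ) / ((n : ℝ) - 1))) E)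
    (hvB : ∀ x ∈ B, v x ≤ a - ξ)
    (hvQ : a - ξ / 3 ≤ (∫ x in Q, v x) / (volume Q).toReal) :
    c₀ * (ξ / 3) ^ ((n : ℝ) / ((n : ℝ) - 1)) * h ^ n ≤
      ∫ x in E, |v x - (∫ y in E, v y) / (volume E).toReal| ^ ((n : ℝ) / ((n : ℝ) - 1)) :=
  oscillation_dichotomy_general n hn h c₀ ξ a hξ E B Q hBE hQE hBm hEfin hB hQvol v hvint hvpow hvB
    hvQ
end

section
/- Let q > 1 and γ ∈ (1 − 1/q, 1), and let M > γ^q / (1 − (1−γ)q). Then for all 0 < t₁ < t₂ ≤ 1: (M/q)·(t₂^γ − t₁^γ)^q / (t₂ − t₁)^{q−1} > (γ^q/q)·(t₂^{1−(1−γ)q} − t₁^{1−(1−γ)q}) / (1 − (1−γ)q); that is, the straight-line segment joining (t₁, t₁^γ) to (t₂, t₂^γ) with weight M has strictly larger q-action than the arc of t ↦ t^γ with weight 1. -/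
open Real

lemma aux_logconcave (t₁ t₂ a b l : ℝ) (ht₁ : 0 < t₁) (h12 : t₁ < t₂)
    (ha : 0 ≤ a) (hb : 0 ≤ b) (hl0 : 0 ≤ l) (hl1 : l ≤ 1) :
    (t₂ ^ a - t₁ ^ a) ^ l * (t₂ ^ b - t₁ ^ b) ^ (1 - l)
      ≤ t₂ ^ (l * a + (1 - l) * b) - t₁ ^ (l * a + (1 - l) * b) := by
  have ht₂ : 0 < t₂ := ht₁.trans h12
  set r := t₁ / t₂ with hr
  have hr0 : 0 < r := div_pos ht₁ ht₂
  have hr1 : r < 1 := (div_lt_one ht₂).mpr h12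
  have hfact : ∀ s : ℝ, t₁ ^ s = t₂ ^ s * r ^ s := by
    intro s
    rw [hr, Real.div_rpow ht₁.le ht₂.le]
    rw [mul_div_cancel₀ _ (ne_of_gt (Real.rpow_pos_of_pos ht₂ s))]
  have hD : ∀ s : ℝ, t₂ ^ s - t₁ ^ s = t₂ ^ s * (1 - r ^ s) := by
    intro s; rw [hfact s]; ring
  have hrle : ∀ s : ℝ, 0 ≤ s → r ^ s ≤ 1 := fun s hs =>
    Real.rpow_le_one hr0.le hr1.le hs
  have hconv : r ^ (l * a + (1 - l) * b) ≤ l * r ^ a + (1 - l) * r ^ b := by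
    have h1l : (0:ℝ) ≤ 1 - l := by linarith
    have hsum : l + (1 - l) = 1 := by ring
    have h := convexOn_exp.2 (Set.mem_univ (Real.log r * a))
      (Set.mem_univ (Real.log r * b)) hl0 h1l hsum
    simp only [smul_eq_mul] at h
    rw [Real.rpow_def_of_pos hr0, Real.rpow_def_of_pos hr0,
      Real.rpow_def_of_pos hr0]
    calc Real.exp (Real.log r * (l * a + (1 - l) * b))
        = Real.exp (l * (Real.log r * a) + (1 - l) * (Real.log r * b)) := by
          ring_nf
      _ ≤ l * Real.exp (Real.log r * a) + (1 - l) * Real.exp (Real.log r * b) := h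
  have hamgm : (1 - r ^ a) ^ l * (1 - r ^ b) ^ (1 - l)
      ≤ l * (1 - r ^ a) + (1 - l) * (1 - r ^ b) :=
    Real.geom_mean_le_arith_mean2_weighted hl0 (by linarith)
      (by linarith [hrle a ha]) (by linarith [hrle b hb]) (by ring)
  have key : (1 - r ^ a) ^ l * (1 - r ^ b) ^ (1 - l)
      ≤ 1 - r ^ (l * a + (1 - l) * b) := by
    calc (1 - r ^ a) ^ l * (1 - r ^ b) ^ (1 - l)
        ≤ l * (1 - r ^ a) + (1 - l) * (1 - r ^ b) := hamgm
      _ = 1 - (l * r ^ a + (1 - l) * r ^ b) := by ring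
      _ ≤ 1 - r ^ (l * a + (1 - l) * b) := by linarith
  rw [hD a, hD b, hD (l * a + (1 - l) * b)]
  rw [Real.mul_rpow (Real.rpow_nonneg ht₂.le a) (by linarith [hrle a ha]),
      Real.mul_rpow (Real.rpow_nonneg ht₂.le b) (by linarith [hrle b hb]),
      ← Real.rpow_mul ht₂.le, ← Real.rpow_mul ht₂.le]
  calc t₂ ^ (a * l) * (1 - r ^ a) ^ l * (t₂ ^ (b * (1 - l)) * (1 - r ^ b) ^ (1 - l))
      = t₂ ^ (a * l) * t₂ ^ (b * (1 - l))
          * ((1 - r ^ a) ^ l * (1 - r ^ b) ^ (1 - l)) := by ring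
    _ = t₂ ^ (l * a + (1 - l) * b)
          * ((1 - r ^ a) ^ l * (1 - r ^ b) ^ (1 - l)) := by
        rw [← Real.rpow_add ht₂]; ring_nf
    _ ≤ t₂ ^ (l * a + (1 - l) * b) * (1 - r ^ (l * a + (1 - l) * b)) :=
        mul_le_mul_of_nonneg_left key (Real.rpow_nonneg ht₂.le _)

theorem straight_line_action_larger (q γ M : ℝ) (hq : 1 < q)
    (hγ : γ ∈ Set.Ioo (1 - 1 / q) 1)
    (hM : γ ^ q / (1 - (1 - γ) * q) < M) :
    ∀ t₁ t₂ : ℝ, 0 < t₁ → t₁ < t₂ → t₂ ≤ 1 →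
      (γ ^ q / q) * (t₂ ^ (1 - (1 - γ) * q) - t₁ ^ (1 - (1 - γ) * q)) / (1 - (1 - γ) * q)
        < (M / q) * (t₂ ^ γ - t₁ ^ γ) ^ q / (t₂ - t₁) ^ (q - 1) := by
  intro t₁ t₂ ht₁ h12 ht₂1
  obtain ⟨hγl, hγu⟩ := hγ
  have hq0 : 0 < q := by linarith
  set α := 1 - (1 - γ) * q with hα
  have hα0 : 0 < α := by
    have : 1 - γ < 1 / q := by linarith
    have h2 : (1 - γ) * q < (1 / q) * q := by
      exact mul_lt_mul_of_pos_right this hq0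
    rw [one_div, inv_mul_cancel₀ (ne_of_gt hq0)] at h2
    simpa [hα] using by linarith
  have hγ0 : 0 < γ := by
    have : 0 < 1 - 1 / q := by
      have : 1 / q < 1 := by
        rw [div_lt_one hq0]; exact hq
      linarith
    linarith
  have hγq : (1 / q) * α + (1 - 1 / q) * 1 = γ := by
    field_simp [hα]
    ring
  have ht₂ : 0 < t₂ := ht₁.trans h12
  have hDα : 0 < t₂ ^ α - t₁ ^ α :=
    sub_pos.mpr (Real.rpow_lt_rpow ht₁.le h12 hα0)
  have hDγ : 0 < t₂ ^ γ - t₁ ^ γ :=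
    sub_pos.mpr (Real.rpow_lt_rpow ht₁.le h12 hγ0)
  have hP : 0 < (t₂ - t₁) ^ (q - 1) :=
    Real.rpow_pos_of_pos (by linarith) _
  have hl0 : 0 ≤ 1 / q := by positivity
  have hl1 : 1 / q ≤ 1 := by
    rw [div_le_one hq0]; linarith
  have haux := aux_logconcave t₁ t₂ α 1 (1 / q) ht₁ h12 hα0.le zero_le_one hl0 hl1
  rw [hγq, Real.rpow_one, Real.rpow_one] at haux
  have hkey : (t₂ ^ α - t₁ ^ α) * (t₂ - t₁) ^ (q - 1) ≤ (t₂ ^ γ - t₁ ^ γ) ^ q := by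
    have hnn : 0 ≤ (t₂ ^ α - t₁ ^ α) ^ (1 / q) * (t₂ - t₁) ^ (1 - 1 / q) := by
      apply mul_nonneg <;> exact Real.rpow_nonneg (by linarith) _
    have h2 := Real.rpow_le_rpow hnn haux hq0.le
    rw [Real.mul_rpow (Real.rpow_nonneg hDα.le _)
        (Real.rpow_nonneg (by linarith : (0:ℝ) ≤ t₂ - t₁) _),
      ← Real.rpow_mul hDα.le, ← Real.rpow_mul (by linarith : (0:ℝ) ≤ t₂ - t₁)] at h2
    have e1 : 1 / q * q = 1 := by field_simp
    have e2 : (1 - 1 / q) * q = q - 1 := by field_simp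
    rwa [e1, e2, Real.rpow_one] at h2
  have hγqpos : 0 < γ ^ q := Real.rpow_pos_of_pos hγ0 q
  have hM0 : 0 < M := lt_trans (div_pos hγqpos hα0) hM
  -- step 1: LHS < (M/q) * Dα
  have step1 : (γ ^ q / q) * (t₂ ^ α - t₁ ^ α) / α < (M / q) * (t₂ ^ α - t₁ ^ α) := by
    have h1 : γ ^ q / α < M := hM
    have h2 : (γ ^ q / α) * ((t₂ ^ α - t₁ ^ α) / q) < M * ((t₂ ^ α - t₁ ^ α) / q) :=
      mul_lt_mul_of_pos_right h1 (div_pos hDα hq0)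
    calc (γ ^ q / q) * (t₂ ^ α - t₁ ^ α) / α
        = (γ ^ q / α) * ((t₂ ^ α - t₁ ^ α) / q) := by ring
      _ < M * ((t₂ ^ α - t₁ ^ α) / q) := h2
      _ = (M / q) * (t₂ ^ α - t₁ ^ α) := by ring
  have step2 : (M / q) * (t₂ ^ α - t₁ ^ α)
      ≤ (M / q) * (t₂ ^ γ - t₁ ^ γ) ^ q / (t₂ - t₁) ^ (q - 1) := by
    rw [mul_div_assoc]
    apply mul_le_mul_of_nonneg_left _ (by positivity)
    rw [le_div_iff₀ hP]
    exact hkey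
  exact lt_of_lt_of_le step1 step2
end
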